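/- arXiv:2605.29840 — 2 statements merged into one kernel-verified Lean document; each statement's English description precedes it below -/
import Mathlib

section
/- Let K ~ Bin(N, q1) and X ~ Bin(N, q0) be binomial random variables with q1 > q0, and let f_N^(1) be the probability mass function of K and F_N^(0) the cumulative distribution function of X. Define S_N = Σ_{k=1}^{N} f_N^(1)[k] · (F_N^(0)[k-1])^{N_R}. Then for fixed N_R (or N_R growing at most linearly in N), lim_{N→∞} S_N = 1. -/
/-!
Pick `q0 < t < q1` and split at `m = ⌈t N⌉`. Chernoff's exponential tilting gives `ρ0, ρ1 < 1`
with `P(K < m) ≤ ρ1 ^ N` and `P(X ≥ m) ≤ ρ0 ^ N`. For `k ≥ m` the factor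
`F_N^(0)[k-1] ^ N_R ≥ (1 - ρ0 ^ N) ^ N_R ≥ 1 - C N ρ0 ^ N` by Bernoulli's inequality, so
`(1 - ρ1 ^ N) (1 - C N ρ0 ^ N) ≤ S_N ≤ 1`, and the lower bound tends to `1`.
-/

open Filter

/-- Binomial probability mass function with `N` trials and success probability `q`. -/
noncomputable def binPMF (N : ℕ) (q : ℝ) (k : ℕ) : ℝ :=
  (N.choose k : ℝ) * q ^ k * (1 - q) ^ (N - k)

/-- Binomial cumulative distribution function. -/
noncomputable def binCDF (N : ℕ) (q : ℝ) (k : ℕ) : ℝ :=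
  ∑ j ∈ Finset.range (k + 1), binPMF N q j

open Finset Topology

section Calculus

variable {f : ℝ → ℝ} {d x : ℝ}

lemma HasDerivAt.eventually_nhdsGT_lt_of_neg (hf : HasDerivAt f d x) (hd : d < 0) :
    ∀ᶠ y in 𝓝[>] x, f y < f x := by
  filter_upwards [hf.hasDerivWithinAt.limsup_slope_le' (lt_irrefl x) hd, self_mem_nhdsWithin]
    with y hslope (hy : x < y)
  rw [slope_def_field, div_neg_iff] at hslope
  rcases hslope with ⟨-, h⟩ | ⟨h, -⟩ <;> linarith

lemma HasDerivAt.eventually_nhdsLT_lt_of_pos (hf : HasDerivAt f d x) (hd : 0 < d) :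
    ∀ᶠ y in 𝓝[<] x, f y < f x := by
  filter_upwards [hf.neg.hasDerivWithinAt.limsup_slope_le' (lt_irrefl x) (neg_neg_of_pos hd),
    self_mem_nhdsWithin] with y hslope (hy : y < x)
  rw [slope_def_field, div_neg_iff] at hslope
  rcases hslope with ⟨h, -⟩ | ⟨-, h⟩ <;>
    linarith [Pi.neg_apply f x, Pi.neg_apply f y]

end Calculus

/-- `E[r ^ X] / r ^ t` for `X ~ Bernoulli(q)`. -/
noncomputable def tiltRatio (q t r : ℝ) : ℝ :=
  (q * r + (1 - q)) / r ^ t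

lemma tiltRatio_one (q t : ℝ) : tiltRatio q t 1 = 1 := by
  simp [tiltRatio]

lemma hasDerivAt_tiltRatio_one (q t : ℝ) : HasDerivAt (tiltRatio q t) (q - t) 1 := by
  have hnum : HasDerivAt (fun r : ℝ => q * r + (1 - q)) q 1 := by
    simpa using ((hasDerivAt_id (1 : ℝ)).const_mul q).add_const (1 - q)
  have hden : HasDerivAt (fun r : ℝ => r ^ t) t 1 := by
    simpa using Real.hasDerivAt_rpow_const (x := 1) (p := t) (Or.inl one_ne_zero)
  exact (hnum.fun_div hden (by simp)).congr_deriv (by simp)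

lemma tiltRatio_nonneg {q t r : ℝ} (hq0 : 0 ≤ q) (hq1 : q ≤ 1) (hr : 0 ≤ r) :
    0 ≤ tiltRatio q t r :=
  div_nonneg (by nlinarith) (Real.rpow_nonneg hr t)

lemma exists_one_lt_tiltRatio_lt_one {q t : ℝ} (hqt : q < t) :
    ∃ r, 1 < r ∧ tiltRatio q t r < 1 := by
  obtain ⟨r, hr, hr1⟩ := (((hasDerivAt_tiltRatio_one q t).eventually_nhdsGT_lt_of_neg
    (by linarith)).and eventually_mem_nhdsWithin).exists
  exact ⟨r, hr1, tiltRatio_one q t ▸ hr⟩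

lemma exists_mem_Ioo_tiltRatio_lt_one {q t : ℝ} (htq : t < q) :
    ∃ r ∈ Set.Ioo 0 1, tiltRatio q t r < 1 := by
  have hpos : ∀ᶠ r in 𝓝[<] (1 : ℝ), 0 < r :=
    nhdsWithin_le_nhds (eventually_gt_nhds one_pos)
  obtain ⟨r, hr, hr1, hr0⟩ := (((hasDerivAt_tiltRatio_one q t).eventually_nhdsLT_lt_of_pos
    (by linarith)).and (eventually_mem_nhdsWithin.and hpos)).exists
  exact ⟨r, ⟨hr0, hr1⟩, tiltRatio_one q t ▸ hr⟩

section Binomial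

variable {N : ℕ} {q : ℝ}

lemma binPMF_nonneg (hq0 : 0 ≤ q) (hq1 : q ≤ 1) (k : ℕ) : 0 ≤ binPMF N q k := by
  unfold binPMF
  have : 0 ≤ 1 - q := by linarith
  positivity

lemma sum_binPMF_mul_pow (N : ℕ) (q r : ℝ) :
    ∑ k ∈ range (N + 1), binPMF N q k * r ^ k = (q * r + (1 - q)) ^ N := by
  rw [add_pow]
  refine sum_congr rfl fun k _ => ?_
  rw [binPMF, mul_pow]
  ring

lemma sum_binPMF (N : ℕ) (q : ℝ) : ∑ k ∈ range (N + 1), binPMF N q k = 1 := by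
  simpa using sum_binPMF_mul_pow N q 1

lemma sum_range_add_sum_Ico_binPMF {m : ℕ} (hm : m ≤ N + 1) :
    ∑ k ∈ range m, binPMF N q k + ∑ k ∈ Ico m (N + 1), binPMF N q k = 1 := by
  rw [sum_range_add_sum_Ico _ hm, sum_binPMF]

lemma binCDF_sub_one {m : ℕ} (hm : 1 ≤ m) :
    binCDF N q (m - 1) = ∑ k ∈ range m, binPMF N q k := by
  rw [binCDF, Nat.sub_add_cancel hm]

lemma binCDF_nonneg (hq0 : 0 ≤ q) (hq1 : q ≤ 1) (k : ℕ) : 0 ≤ binCDF N q k :=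
  sum_nonneg fun j _ => binPMF_nonneg hq0 hq1 j

lemma binCDF_mono (hq0 : 0 ≤ q) (hq1 : q ≤ 1) : Monotone (binCDF N q) := fun _ _ h =>
  sum_le_sum_of_subset_of_nonneg (range_subset_range.2 (by omega))
    fun j _ _ => binPMF_nonneg hq0 hq1 j

lemma binCDF_le_one (hq0 : 0 ≤ q) (hq1 : q ≤ 1) {k : ℕ} (hk : k ≤ N) : binCDF N q k ≤ 1 :=
  sum_binPMF N q ▸ binCDF_mono hq0 hq1 hk

/-- Chernoff bound: on `s` the weight `r ^ k / r ^ (t N)` is at least `1`, and its full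
expectation is `tiltRatio q t r ^ N`. -/
lemma sum_binPMF_le_tiltRatio_pow (hq0 : 0 ≤ q) (hq1 : q ≤ 1) {t r : ℝ} (hr : 0 < r)
    {s : Finset ℕ} (hs : s ⊆ range (N + 1)) (hk : ∀ k ∈ s, r ^ (t * N) ≤ r ^ (k : ℝ)) :
    ∑ k ∈ s, binPMF N q k ≤ tiltRatio q t r ^ N := by
  have hrtN : 0 < r ^ (t * N) := Real.rpow_pos_of_pos hr _
  calc ∑ k ∈ s, binPMF N q k
      ≤ ∑ k ∈ s, binPMF N q k * r ^ k / r ^ (t * N) := by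
        refine sum_le_sum fun k hks => ?_
        rw [le_div_iff₀ hrtN, ← Real.rpow_natCast]
        exact mul_le_mul_of_nonneg_left (hk k hks) (binPMF_nonneg hq0 hq1 k)
    _ ≤ (∑ k ∈ range (N + 1), binPMF N q k * r ^ k) / r ^ (t * N) := by
        rw [← sum_div]
        gcongr
        exact fun k _ _ => mul_nonneg (binPMF_nonneg hq0 hq1 k) (by positivity)
    _ = tiltRatio q t r ^ N := by
        rw [sum_binPMF_mul_pow, Real.rpow_mul_natCast hr.le, tiltRatio, div_pow]

lemma exists_binPMF_upper_tail_le_pow (hq0 : 0 ≤ q) (hq1 : q ≤ 1) {t : ℝ} (hqt : q < t) :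
    ∃ ρ ∈ Set.Ico (0 : ℝ) 1, ∀ N (s : Finset ℕ), s ⊆ range (N + 1) →
      (∀ k ∈ s, t * N ≤ k) → ∑ k ∈ s, binPMF N q k ≤ ρ ^ N := by
  obtain ⟨r, hr1, hρ⟩ := exists_one_lt_tiltRatio_lt_one hqt
  refine ⟨_, ⟨tiltRatio_nonneg hq0 hq1 (by linarith), hρ⟩, fun N s hs hk => ?_⟩
  exact sum_binPMF_le_tiltRatio_pow hq0 hq1 (by linarith) hs
    fun k hks => Real.rpow_le_rpow_of_exponent_le hr1.le (hk k hks)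

lemma exists_binPMF_lower_tail_le_pow (hq0 : 0 ≤ q) (hq1 : q ≤ 1) {t : ℝ} (htq : t < q) :
    ∃ ρ ∈ Set.Ico (0 : ℝ) 1, ∀ N (s : Finset ℕ), s ⊆ range (N + 1) →
      (∀ k ∈ s, k ≤ t * N) → ∑ k ∈ s, binPMF N q k ≤ ρ ^ N := by
  obtain ⟨r, ⟨hr0, hr1⟩, hρ⟩ := exists_mem_Ioo_tiltRatio_lt_one htq
  refine ⟨_, ⟨tiltRatio_nonneg hq0 hq1 hr0.le, hρ⟩, fun N s hs hk => ?_⟩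
  exact sum_binPMF_le_tiltRatio_pow hq0 hq1 hr0 hs
    fun k hks => Real.rpow_le_rpow_of_exponent_ge hr0 hr1.le (hk k hks)

end Binomial

section WinProbability

variable {N n : ℕ} {q0 q1 : ℝ}

lemma sum_binPMF_mul_binCDF_pow_le_one (hq0 : 0 ≤ q0) (hq0' : q0 ≤ 1) (hq1 : 0 ≤ q1)
    (hq1' : q1 ≤ 1) :
    ∑ k ∈ Icc 1 N, binPMF N q1 k * binCDF N q0 (k - 1) ^ n ≤ 1 :=
  calc ∑ k ∈ Icc 1 N, binPMF N q1 k * binCDF N q0 (k - 1) ^ n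
      ≤ ∑ k ∈ Icc 1 N, binPMF N q1 k := sum_le_sum fun k hk =>
        mul_le_of_le_one_right (binPMF_nonneg hq1 hq1' k) (pow_le_one₀
          (binCDF_nonneg hq0 hq0' _) (binCDF_le_one hq0 hq0' (by grind)))
    _ ≤ ∑ k ∈ range (N + 1), binPMF N q1 k := sum_le_sum_of_subset_of_nonneg
        (fun k hk => by grind) fun k _ _ => binPMF_nonneg hq1 hq1' k
    _ = 1 := sum_binPMF N q1

lemma sum_Ico_binPMF_mul_binCDF_pow_le (hq0 : 0 ≤ q0) (hq0' : q0 ≤ 1) (hq1 : 0 ≤ q1)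
    (hq1' : q1 ≤ 1) {m : ℕ} (hm : 1 ≤ m) :
    (∑ k ∈ Ico m (N + 1), binPMF N q1 k) * binCDF N q0 (m - 1) ^ n
      ≤ ∑ k ∈ Icc 1 N, binPMF N q1 k * binCDF N q0 (k - 1) ^ n :=
  calc (∑ k ∈ Ico m (N + 1), binPMF N q1 k) * binCDF N q0 (m - 1) ^ n
      ≤ ∑ k ∈ Ico m (N + 1), binPMF N q1 k * binCDF N q0 (k - 1) ^ n := by
        rw [sum_mul]
        refine sum_le_sum fun k hk => mul_le_mul_of_nonneg_left ?_ (binPMF_nonneg hq1 hq1' k)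
        exact pow_le_pow_left₀ (binCDF_nonneg hq0 hq0' _)
          (binCDF_mono hq0 hq0' (by grind)) n
    _ ≤ ∑ k ∈ Icc 1 N, binPMF N q1 k * binCDF N q0 (k - 1) ^ n :=
        sum_le_sum_of_subset_of_nonneg (fun k hk => by grind)
          fun k _ _ => mul_nonneg (binPMF_nonneg hq1 hq1' k)
            (pow_nonneg (binCDF_nonneg hq0 hq0' _) n)

lemma one_sub_mul_one_sub_le_sum_binPMF_mul_binCDF_pow (hq0 : 0 ≤ q0) (hq0' : q0 ≤ 1)
    (hq1 : 0 ≤ q1) (hq1' : q1 ≤ 1) {m : ℕ} {ε0 ε1 : ℝ} (hm1 : 1 ≤ m) (hmN : m ≤ N + 1)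
    (h1 : ∑ k ∈ range m, binPMF N q1 k ≤ ε1)
    (h0 : ∑ k ∈ Ico m (N + 1), binPMF N q0 k ≤ ε0) (hε1 : ε1 ≤ 1) :
    (1 - ε1) * (1 - n * ε0) ≤ ∑ k ∈ Icc 1 N, binPMF N q1 k * binCDF N q0 (k - 1) ^ n := by
  have hK : 1 - ε1 ≤ ∑ k ∈ Ico m (N + 1), binPMF N q1 k := by
    linarith [sum_range_add_sum_Ico_binPMF (q := q1) hmN]
  have hcdf : 1 - ε0 ≤ binCDF N q0 (m - 1) := by
    linarith [binCDF_sub_one (N := N) (q := q0) hm1, sum_range_add_sum_Ico_binPMF (q := q0) hmN]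
  have hcdf0 := binCDF_nonneg hq0 hq0' (N := N) (m - 1)
  have hbernoulli : 1 - n * ε0 ≤ binCDF N q0 (m - 1) ^ n := by
    nlinarith [one_add_mul_sub_le_pow (by linarith : -1 ≤ binCDF N q0 (m - 1)) n,
      n.cast_nonneg (α := ℝ)]
  exact (mul_le_mul_of_nonneg hK hbernoulli (by linarith) (by positivity)).trans
    (sum_Ico_binPMF_mul_binCDF_pow_le hq0 hq0' hq1 hq1' hm1)

end WinProbability

/-- with `K ~ Bin(N, q1)`, `X ~ Bin(N, q0)`, `q1 > q0`, and
`N_R ∈ O(N)`, the quantity `S_N = Σ_{k=1}^N f_N^{(1)}[k] (F_N^{(0)}[k-1])^{N_R}`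
tends to 1 as `N → ∞`. -/
theorem stmt_0 (q0 q1 : ℝ) (hq0 : 0 ≤ q0) (hq1 : q1 ≤ 1) (hlt : q0 < q1)
    (N_R : ℕ → ℕ) (C : ℝ) (hNR : ∀ N, (N_R N : ℝ) ≤ C * N) :
    Tendsto (fun N : ℕ =>
      ∑ k ∈ Finset.Icc 1 N, binPMF N q1 k * (binCDF N q0 (k - 1)) ^ (N_R N))
      atTop (nhds 1) := by
  have hq0' : q0 ≤ 1 := by linarith
  have hq1' : 0 ≤ q1 := by linarith
  obtain ⟨t, hq0t, htq1⟩ := exists_between hlt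
  obtain ⟨ρ0, ⟨hρ0, hρ0'⟩, tail0⟩ := exists_binPMF_upper_tail_le_pow hq0 hq0' hq0t
  obtain ⟨ρ1, ⟨hρ1, hρ1'⟩, tail1⟩ := exists_binPMF_lower_tail_le_pow hq1' hq1 htq1
  have hlim : Tendsto (fun N : ℕ => (1 - ρ1 ^ N) * (1 - C * N * ρ0 ^ N)) atTop (𝓝 1) := by
    simpa [mul_assoc] using ((tendsto_pow_atTop_nhds_zero_of_lt_one hρ1 hρ1').const_sub 1).mul
      (((tendsto_self_mul_const_pow_of_lt_one hρ0 hρ0').const_mul C).const_sub 1)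
  refine tendsto_of_tendsto_of_tendsto_of_le_of_le' hlim tendsto_const_nhds ?_
    (.of_forall fun N => sum_binPMF_mul_binCDF_pow_le_one hq0 hq0' hq1' hq1)
  filter_upwards [eventually_ge_atTop 1] with N hN
  have hN' : (1 : ℝ) ≤ N := by exact_mod_cast hN
  have hm1 : 1 ≤ ⌈t * N⌉₊ := Nat.one_le_iff_ne_zero.2 <| by
    simpa using mul_pos (hq0.trans_lt hq0t) (by linarith : (0 : ℝ) < N)
  have hmN : ⌈t * N⌉₊ ≤ N + 1 := Nat.ceil_le.2 <| by push_cast; nlinarith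
  calc (1 - ρ1 ^ N) * (1 - C * N * ρ0 ^ N)
      ≤ (1 - ρ1 ^ N) * (1 - N_R N * ρ0 ^ N) := by
        have := pow_le_one₀ hρ1 hρ1'.le (n := N)
        gcongr
        exact hNR N
    _ ≤ _ := one_sub_mul_one_sub_le_sum_binPMF_mul_binCDF_pow hq0 hq0' hq1' hq1 hm1 hmN
        (tail1 N _ (range_subset_range.2 hmN) fun k hk => (Nat.lt_ceil.1 (mem_range.1 hk)).le)
        (tail0 N _ (fun k hk => by grind) fun k hk => Nat.ceil_le.1 (mem_Ico.1 hk).1)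
        (pow_le_one₀ hρ1 hρ1'.le)
end

section
/- For invertible positive operators A(t) depending differentiably on a parameter t, the derivative of the matrix logarithm satisfies d/dt log A(t) = ∫_0^1 [sA(t) + (1-s)I]^{-1} (dA/dt) [sA(t) + (1-s)I]^{-1} ds. -/
open intervalIntegral

attribute [local instance] Matrix.frobeniusNormedAddCommGroup
  Matrix.frobeniusNormedRing Matrix.frobeniusNormedSpace

/-- The matrix logarithm, via the integral representation
`log A = ∫_0^1 (A - I)[s(A - I) + I]⁻¹ ds`. -/
noncomputable def matrixLog {d : ℕ} (B : Matrix (Fin d) (Fin d) ℝ) :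
    Matrix (Fin d) (Fin d) ℝ :=
  ∫ s in (0:ℝ)..1, (B - 1) * (s • (B - 1) + 1)⁻¹

/-! Differentiating under the integral sign, `C ↦ (C - 1) * (s • (C - 1) + 1)⁻¹` has derivative
`H ↦ W H W` with `W = (s • (B - 1) + 1)⁻¹`, by the product rule and the identity
`W = 1 - s • ((B - 1) * W)`. The inverses stay uniformly bounded for `B` near a point where the
whole segment `s • (B - 1) + 1`, `s ∈ [0, 1]`, is invertible, which holds for positive-definite `B`
since it is the convex combination `s • B + (1 - s) • 1`; this gives the domination needed. -/

open Filter Topology Set MeasureTheory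
open scoped Interval ComplexOrder

theorem smul_sub_add_eq_smul_add_one_sub_smul {k V : Type*} [Ring k] [AddCommGroup V]
    [Module k V] (s : k) (x y : V) : s • (x - y) + y = s • x + (1 - s) • y := by
  rw [smul_sub, sub_smul, one_smul]
  abel

section NormedAlgebra

variable {R : Type*} [NormedRing R] [CompleteSpace R]

theorem ContinuousAt.ringInverse {X : Type*} [TopologicalSpace X] {f : X → R} {x : X}
    (hf : ContinuousAt f x) (h : IsUnit (f x)) : ContinuousAt (fun y => Ring.inverse (f y)) x :=
  (NormedRing.inverse_continuousAt h.unit).comp_of_eq hf h.unit_spec.symm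

theorem ContinuousOn.ringInverse {X : Type*} [TopologicalSpace X] {f : X → R} {S : Set X}
    (hf : ContinuousOn f S) (h : ∀ x ∈ S, IsUnit (f x)) :
    ContinuousOn (fun y => Ring.inverse (f y)) S := fun x hx =>
  (NormedRing.inverse_continuousAt (h x hx).unit).comp_continuousWithinAt_of_eq (hf x hx)
    (h x hx).unit_spec.symm

theorem IsCompact.exists_eventually_forall_isUnit_and_norm_ringInverse_le
    {X Y : Type*} [TopologicalSpace X] [TopologicalSpace Y] {K : Set Y} (hK : IsCompact K)
    {g : X × Y → R} (hg : Continuous g) {x₀ : X} (h : ∀ y ∈ K, IsUnit (g (x₀, y))) :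
    ∃ C, ∀ᶠ x in 𝓝 x₀, ∀ y ∈ K, IsUnit (g (x, y)) ∧ ‖Ring.inverse (g (x, y))‖ ≤ C := by
  have hinv : ∀ y ∈ K, ContinuousAt (fun z => Ring.inverse (g z)) (x₀, y) :=
    fun y hy => hg.continuousAt.ringInverse (h y hy)
  obtain ⟨C, hC⟩ := hK.exists_bound_of_continuousOn fun y hy =>
    ((hinv y hy).comp (Continuous.prodMk_right x₀).continuousAt).continuousWithinAt
  refine ⟨C + 1, hK.eventually_forall_of_forall_eventually fun y hy => ?_⟩
  have hunit : ∀ᶠ z in 𝓝 (x₀, y), IsUnit (g z) :=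
    hg.continuousAt.eventually_mem (Units.isOpen.mem_nhds (h y hy))
  have hnorm : ∀ᶠ z in 𝓝 (x₀, y), ‖Ring.inverse (g z)‖ < C + 1 :=
    (hinv y hy).norm.eventually (gt_mem_nhds ((hC y hy).trans_lt (lt_add_one C)))
  filter_upwards [hunit, hnorm] with z hz hz' using ⟨hz, hz'.le⟩

variable [NormedAlgebra ℝ R]

open ContinuousLinearMap in
theorem hasFDerivAt_sub_one_mul_ringInverse {B : R} {s : ℝ} (h : IsUnit (s • (B - 1) + 1)) :
    HasFDerivAt (fun C : R => (C - 1) * Ring.inverse (s • (C - 1) + 1))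
      (mulLeftRight ℝ R (Ring.inverse (s • (B - 1) + 1)) (Ring.inverse (s • (B - 1) + 1))) B := by
  obtain ⟨u, hu⟩ := h
  have hsub : HasFDerivAt (fun C : R => C - 1) (ContinuousLinearMap.id ℝ R) B :=
    (hasFDerivAt_id B).sub_const 1
  have hinv : HasFDerivAt (fun C : R => Ring.inverse (s • (C - 1) + 1))
      ((-mulLeftRight ℝ R ↑u⁻¹ ↑u⁻¹).comp (s • ContinuousLinearMap.id ℝ R)) B := by
    have := hasFDerivAt_ringInverse (𝕜 := ℝ) u
    rw [hu] at this
    exact this.comp B ((hsub.const_smul s).add_const 1)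
  have hW : (↑u⁻¹ : R) = 1 - s • ((B - 1) * ↑u⁻¹) := by
    refine eq_sub_of_add_eq' ?_
    rw [← smul_mul_assoc, ← add_one_mul (s • (B - 1)), ← hu, u.mul_inv]
  refine (hsub.mul' hinv).congr_fderiv ?_
  ext H
  simp only [← hu, Ring.inverse_unit, mulLeftRight_apply, add_apply, comp_apply, neg_apply,
    smul_apply, id_apply, smul_eq_mul, op_smul_eq_mul]
  conv_rhs => arg 1; arg 1; rw [hW]
  simp only [sub_mul, one_mul, smul_mul_assoc, mul_neg, mul_smul_comm, mul_assoc]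
  abel

theorem continuousOn_ringInverse_smul_sub_one_add_one {B : R}
    (h : ∀ s ∈ Icc (0 : ℝ) 1, IsUnit (s • (B - 1) + 1)) :
    ContinuousOn (fun s : ℝ => Ring.inverse (s • (B - 1) + 1)) (Icc 0 1) :=
  (by fun_prop : Continuous fun s : ℝ => s • (B - 1) + 1).continuousOn.ringInverse h

open ContinuousLinearMap in
theorem hasFDerivAt_integral_sub_one_mul_ringInverse {B₀ : R}
    (h : ∀ s ∈ Icc (0 : ℝ) 1, IsUnit (s • (B₀ - 1) + 1)) :
    HasFDerivAt (fun B : R => ∫ s in (0 : ℝ)..1, (B - 1) * Ring.inverse (s • (B - 1) + 1))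
      (∫ s in (0 : ℝ)..1, mulLeftRight ℝ R (Ring.inverse (s • (B₀ - 1) + 1))
        (Ring.inverse (s • (B₀ - 1) + 1))) B₀ := by
  have hg : Continuous fun p : R × ℝ => p.2 • (p.1 - 1) + 1 := by fun_prop
  obtain ⟨C, hC⟩ := isCompact_Icc.exists_eventually_forall_isUnit_and_norm_ringInverse_le hg h
  have hΙ : Ι (0 : ℝ) 1 ⊆ Icc 0 1 := uIoc_subset_uIcc.trans_eq (uIcc_of_le zero_le_one)
  have hF : ∀ B : R, (∀ s ∈ Icc (0 : ℝ) 1, IsUnit (s • (B - 1) + 1)) →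
      ContinuousOn (fun s : ℝ => (B - 1) * Ring.inverse (s • (B - 1) + 1)) (Icc 0 1) :=
    fun B hB => continuousOn_const.mul (continuousOn_ringInverse_smul_sub_one_add_one hB)
  have hW := continuousOn_ringInverse_smul_sub_one_add_one h
  refine hasFDerivAt_integral_of_dominated_of_fderiv_le (μ := volume)
    (F := fun B s => (B - 1) * Ring.inverse (s • (B - 1) + 1))
    (F' := fun B s => mulLeftRight ℝ R (Ring.inverse (s • (B - 1) + 1))
      (Ring.inverse (s • (B - 1) + 1))) (bound := fun _ => C * C) hC ?_ ?_
    ?_ ?_ intervalIntegrable_const ?_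
  · filter_upwards [hC] with B hB
    exact ((hF B fun s hs => (hB s hs).1).mono hΙ).aestronglyMeasurable measurableSet_uIoc
  · exact (hF B₀ h).intervalIntegrable_of_Icc zero_le_one
  · exact (((mulLeftRight ℝ R).continuous.comp_continuousOn hW).clm_apply hW).mono hΙ
      |>.aestronglyMeasurable measurableSet_uIoc
  · refine .of_forall fun s hs B hB => ?_
    have hC₀ : 0 ≤ C := (norm_nonneg _).trans (hB s (hΙ hs)).2
    exact (opNorm_mulLeftRight_apply_apply_le ℝ R _ _).trans
      (mul_le_mul (hB s (hΙ hs)).2 (hB s (hΙ hs)).2 (norm_nonneg _) hC₀)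
  · exact .of_forall fun s hs B hB => hasFDerivAt_sub_one_mul_ringInverse (hB s (hΙ hs)).1

open ContinuousLinearMap in
theorem HasDerivAt.integral_sub_one_mul_ringInverse {A : ℝ → R} {A' : R} {t : ℝ}
    (hA : HasDerivAt A A' t) (h : ∀ s ∈ Icc (0 : ℝ) 1, IsUnit (s • (A t - 1) + 1)) :
    HasDerivAt (fun u => ∫ s in (0 : ℝ)..1, (A u - 1) * Ring.inverse (s • (A u - 1) + 1))
      (∫ s in (0 : ℝ)..1, Ring.inverse (s • (A t - 1) + 1) * A' *
        Ring.inverse (s • (A t - 1) + 1)) t := by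
  have hW := continuousOn_ringInverse_smul_sub_one_add_one h
  have hint : IntervalIntegrable (fun s : ℝ => mulLeftRight ℝ R
      (Ring.inverse (s • (A t - 1) + 1)) (Ring.inverse (s • (A t - 1) + 1))) volume 0 1 :=
    (((mulLeftRight ℝ R).continuous.comp_continuousOn hW).clm_apply hW
      ).intervalIntegrable_of_Icc zero_le_one
  have := (hasFDerivAt_integral_sub_one_mul_ringInverse h).comp_hasDerivAt t hA
  rw [intervalIntegral_apply hint] at this
  simpa only [Function.comp_def, mulLeftRight_apply] using this

end NormedAlgebra

theorem Matrix.PosDef.isUnit_smul_sub_one_add_one {n 𝕜 : Type*} [Fintype n] [DecidableEq n]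
    [RCLike 𝕜] {B : Matrix n n 𝕜} (hB : B.PosDef) {s : ℝ} (hs : s ∈ Icc (0 : ℝ) 1) :
    IsUnit (s • (B - 1) + 1) := by
  rw [smul_sub_add_eq_smul_add_one_sub_smul]
  obtain ⟨hs₀, hs₁⟩ := hs
  rcases hs₀.eq_or_lt with rfl | hs₀
  · simp
  · exact ((hB.smul hs₀).add_posSemidef (PosSemidef.one.smul (sub_nonneg.mpr hs₁))).isUnit

theorem matrixLog_eq_integral_ringInverse {d : ℕ} (B : Matrix (Fin d) (Fin d) ℝ) :
    matrixLog B = ∫ s in (0 : ℝ)..1, (B - 1) * Ring.inverse (s • (B - 1) + 1) := by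
  simp only [matrixLog, Matrix.nonsing_inv_eq_ringInverse]

attribute [local instance] Matrix.frobeniusNormedAlgebra

theorem stmt_18_general {d : ℕ} (A : ℝ → Matrix (Fin d) (Fin d) ℝ)
    (A' : Matrix (Fin d) (Fin d) ℝ) (t : ℝ)
    (hpos : ∀ u, (A u).PosDef) (hA : HasDerivAt A A' t) :
    HasDerivAt (fun u => matrixLog (A u))
      (∫ s in (0:ℝ)..1, (s • A t + (1 - s) • 1)⁻¹ * A' * (s • A t + (1 - s) • 1)⁻¹) t := by
  have h := hA.integral_sub_one_mul_ringInverse fun s hs =>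
    (hpos t).isUnit_smul_sub_one_add_one hs
  simp only [← matrixLog_eq_integral_ringInverse] at h
  refine h.congr_deriv (integral_congr fun s _ => ?_)
  simp only [Matrix.nonsing_inv_eq_ringInverse, smul_sub_add_eq_smul_add_one_sub_smul]

/-- for a differentiable family `A(t)` of positive-definite
matrices, `d/dt log A(t) = ∫_0^1 [sA(t) + (1-s)I]⁻¹ (dA/dt) [sA(t) + (1-s)I]⁻¹ ds`. -/
theorem stmt_18 {d : ℕ} (A : ℝ → Matrix (Fin d) (Fin d) ℝ)
    (A' : Matrix (Fin d) (Fin d) ℝ) (t : ℝ)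
    (hpos : ∀ u, (A u).PosDef) (hA : HasDerivAt A A' t)
    (hdiff : Differentiable ℝ A) :
    HasDerivAt (fun u => matrixLog (A u))
      (∫ s in (0:ℝ)..1, (s • A t + (1 - s) • 1)⁻¹ * A' * (s • A t + (1 - s) • 1)⁻¹) t :=
  stmt_18_general A A' t hpos hA
end
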